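/- If the shifted saddle-point system [[A + p E, J^T],[J, 0]] [Z; Z_⊥] = [E^T W; 0] has a solution with W = Π^T W, then Z satisfies the projected shifted linear system (Π A Π^T + p E) Z = E^T W restricted to the range of Π^T; in particular Z lies in the kernel of J and Π A Π^T Z + p E Z = Π E^T W. -/
import Mathlib


open Matrix

theorem saddle_point_projected_system {n p k : ℕ}
    (E : Matrix (Fin n) (Fin n) ℂ) (J : Matrix (Fin p) (Fin n) ℂ)
    (A : Matrix (Fin n) (Fin n) ℂ) (ps : ℂ)
    (hE : IsUnit E.det) (hEsym : Eᵀ = E)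
    (hS : IsUnit (J * E⁻¹ * Jᵀ).det)
    (W Z : Matrix (Fin n) (Fin k) ℂ) (Zperp : Matrix (Fin p) (Fin k) ℂ)
    (hW : (1 - E⁻¹ * Jᵀ * (J * E⁻¹ * Jᵀ)⁻¹ * J) * W = W)
    (hsaddle1 : (A + ps • E) * Z + Jᵀ * Zperp = Eᵀ * W)
    (hsaddle2 : J * Z = 0) :
    let P : Matrix (Fin n) (Fin n) ℂ := 1 - E⁻¹ * Jᵀ * (J * E⁻¹ * Jᵀ)⁻¹ * J
    J * Z = 0 ∧ Pᵀ * A * P * Z + ps • (E * Z) = Pᵀ * Eᵀ * W := by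
  intro P
  refine ⟨hsaddle2, ?_⟩
  have hS1 : (J * E⁻¹ * Jᵀ) * (J * E⁻¹ * Jᵀ)⁻¹ = 1 := Matrix.mul_nonsing_inv _ hS
  have hE1 : E⁻¹ * E = 1 := Matrix.nonsing_inv_mul E hE
  -- P * Z = Z
  have hPZ : P * Z = Z := by
    show (1 - E⁻¹ * Jᵀ * (J * E⁻¹ * Jᵀ)⁻¹ * J) * Z = Z
    rw [Matrix.sub_mul, Matrix.one_mul, Matrix.mul_assoc _ J Z, hsaddle2,
      Matrix.mul_zero, sub_zero]
  -- J * P = 0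
  have hJP : J * P = 0 := by
    show J * (1 - E⁻¹ * Jᵀ * (J * E⁻¹ * Jᵀ)⁻¹ * J) = 0
    rw [Matrix.mul_sub, Matrix.mul_one, show J * (E⁻¹ * Jᵀ * (J * E⁻¹ * Jᵀ)⁻¹ * J)
      = (J * E⁻¹ * Jᵀ) * (J * E⁻¹ * Jᵀ)⁻¹ * J from by
        simp only [← Matrix.mul_assoc], hS1, Matrix.one_mul, sub_self]
  -- symmetry of the Schur complement
  have hSsym : (J * E⁻¹ * Jᵀ)ᵀ = J * E⁻¹ * Jᵀ := by
    rw [Matrix.transpose_mul, Matrix.transpose_mul, Matrix.transpose_transpose,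
      Matrix.transpose_nonsing_inv, hEsym, ← Matrix.mul_assoc]
  have hSinvT : ((J * E⁻¹ * Jᵀ)⁻¹)ᵀ = (J * E⁻¹ * Jᵀ)⁻¹ := by
    rw [Matrix.transpose_nonsing_inv, hSsym]
  -- explicit form of Pᵀ
  have hPT : Pᵀ = 1 - Jᵀ * ((J * E⁻¹ * Jᵀ)⁻¹ * (J * E⁻¹)) := by
    show (1 - E⁻¹ * Jᵀ * (J * E⁻¹ * Jᵀ)⁻¹ * J)ᵀ = _
    rw [Matrix.transpose_sub, Matrix.transpose_one, Matrix.transpose_mul,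
      Matrix.transpose_mul, Matrix.transpose_mul, Matrix.transpose_transpose,
      Matrix.transpose_nonsing_inv E, hEsym, hSinvT]
  -- Pᵀ * Jᵀ = 0
  have hPTJT : Pᵀ * Jᵀ = 0 := by
    have := congrArg Matrix.transpose hJP
    simpa using this
  -- Pᵀ * (E * Z) = E * Z
  have hPTEZ : Pᵀ * (E * Z) = E * Z := by
    rw [hPT, Matrix.sub_mul, Matrix.one_mul]
    have : Jᵀ * ((J * E⁻¹ * Jᵀ)⁻¹ * (J * E⁻¹)) * (E * Z) = 0 := by
      simp only [Matrix.mul_assoc]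
      rw [← Matrix.mul_assoc E⁻¹ E Z, hE1, Matrix.one_mul, hsaddle2,
        Matrix.mul_zero, Matrix.mul_zero]
    rw [this, sub_zero]
  -- A * Z from the first saddle equation
  have hAZ : A * Z = Eᵀ * W - ps • (E * Z) - Jᵀ * Zperp := by
    have h := hsaddle1
    rw [Matrix.add_mul, Matrix.smul_mul] at h
    rw [eq_sub_iff_add_eq, eq_sub_iff_add_eq, ← h]
    abel
  calc Pᵀ * A * P * Z + ps • (E * Z)
      = Pᵀ * (A * Z) + ps • (E * Z) := by
        rw [Matrix.mul_assoc (Pᵀ * A) P Z, hPZ, Matrix.mul_assoc]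
    _ = Pᵀ * Eᵀ * W := by
        rw [hAZ, Matrix.mul_sub, Matrix.mul_sub, Matrix.mul_smul, hPTEZ]
        simp only [← Matrix.mul_assoc]
        rw [hPTJT, Matrix.zero_mul, sub_zero, sub_add_cancel]
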